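/- arXiv:1510.04489 — 6 statements merged into one kernel-verified Lean document; each statement's English description precedes it below -/
import Mathlib

section
/- Let m ≥ 1 and let φ ∈ (1,2] be a real root of ρ^m − ρ^{m−1} − 1. If ρ is any complex root of this polynomial with ρ ≠ φ and ρ̄ (its conjugate, also a root), then |ρ| < φ; i.e., φ is the unique root of maximal modulus. -/
/-!
Write `m = n + 1`, so that a root satisfies `ρ ^ (n + 1) = ρ ^ n + 1`. The triangle inequality
gives `r ^ n * (r - 1) ≤ 1` for `r = ‖ρ‖`, while `x ↦ x ^ n * (x - 1)` is strictly increasing on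
`[1, ∞)` and equals `1` at `φ`; hence `‖ρ‖ ≤ φ`. If `‖ρ‖ = φ`, the triangle inequality
`‖ρ ^ n + 1‖ ≤ ‖ρ ^ n‖ + 1` is an equality, which forces `ρ ^ n` and then `ρ` to be positive
reals, so `ρ = ‖ρ‖ = φ`.
-/

lemma Complex.eq_norm_of_norm_add_one {z : ℂ} (h : ‖z + 1‖ = ‖z‖ + 1) : z = ‖z‖ := by
  have h' : ‖z + 1‖ = ‖z‖ + ‖(1 : ℂ)‖ := by rw [h, norm_one]
  simpa using norm_add_eq_iff_real.mp h'

section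

variable {n : ℕ}

lemma strictMonoOn_pow_succ_sub_pow :
    StrictMonoOn (fun x : ℝ => x ^ (n + 1) - x ^ n) (Set.Ici 1) := by
  intro a (ha : 1 ≤ a) b (hb : 1 ≤ b) hab
  have hpow : a ^ n ≤ b ^ n := pow_le_pow_left₀ (by linarith) hab.le n
  have hbn : 0 < b ^ n := pow_pos (by linarith) n
  calc a ^ (n + 1) - a ^ n = a ^ n * (a - 1) := by ring
    _ ≤ b ^ n * (a - 1) := mul_le_mul_of_nonneg_right hpow (by linarith)
    _ < b ^ n * (b - 1) := mul_lt_mul_of_pos_left (by linarith) hbn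
    _ = b ^ (n + 1) - b ^ n := by ring

lemma norm_pow_succ_le_of_pow_succ_eq {ρ : ℂ} (hρ : ρ ^ (n + 1) = ρ ^ n + 1) :
    ‖ρ‖ ^ (n + 1) ≤ ‖ρ‖ ^ n + 1 := by
  calc ‖ρ‖ ^ (n + 1) = ‖ρ ^ n + 1‖ := by rw [← norm_pow, hρ]
    _ ≤ ‖ρ ^ n‖ + ‖(1 : ℂ)‖ := norm_add_le _ _
    _ = ‖ρ‖ ^ n + 1 := by rw [norm_pow, norm_one]

lemma norm_le_of_pow_succ_eq {φ : ℝ} (hφ : 1 ≤ φ) (hφroot : φ ^ (n + 1) = φ ^ n + 1)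
    {ρ : ℂ} (hρ : ρ ^ (n + 1) = ρ ^ n + 1) : ‖ρ‖ ≤ φ := by
  by_contra! hlt
  have := strictMonoOn_pow_succ_sub_pow (n := n) hφ (hφ.trans hlt.le : 1 ≤ ‖ρ‖) hlt
  linarith [norm_pow_succ_le_of_pow_succ_eq hρ]

lemma eq_norm_of_norm_pow_succ_eq {ρ : ℂ} (hρ : ρ ^ (n + 1) = ρ ^ n + 1)
    (hnorm : ‖ρ‖ ^ (n + 1) = ‖ρ‖ ^ n + 1) : ρ = ‖ρ‖ := by
  set t := ‖ρ ^ n‖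
  have hρn : ρ ^ n = t := Complex.eq_norm_of_norm_add_one (by
    rw [← hρ, norm_pow, norm_pow, hnorm])
  have hρt : ρ * t = t + 1 := by rw [← hρn, ← pow_succ', hρ]
  have ht0 : t ≠ 0 := by
    rintro h
    simp [h] at hρt
  have hρreal : ρ = ((t + 1) / t : ℝ) := by
    push_cast
    rw [eq_div_iff (Complex.ofReal_ne_zero.mpr ht0), hρt]
  rw [hρreal, Complex.norm_real, Real.norm_of_nonneg (by positivity)]

end

theorem dominant_root_general (m : ℕ) (φ : ℝ) (hφ : φ ∈ Set.Ioc (1 : ℝ) 2)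
    (hroot : φ ^ m - φ ^ (m - 1) - 1 = 0)
    (ρ : ℂ) (hρ : ρ ^ m - ρ ^ (m - 1) - 1 = 0) (hne : ρ ≠ (φ : ℂ)) :
    ‖ρ‖ < φ := by
  cases m with
  | zero => simp at hroot
  | succ n =>
    simp only [Nat.add_sub_cancel] at hroot hρ
    have hφroot : φ ^ (n + 1) = φ ^ n + 1 := by linarith
    have hρroot : ρ ^ (n + 1) = ρ ^ n + 1 := by linear_combination hρ
    refine (norm_le_of_pow_succ_eq hφ.1.le hφroot hρroot).lt_of_ne fun h => hne ?_
    rw [← h]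
    exact eq_norm_of_norm_pow_succ_eq hρroot (h ▸ hφroot)

/-- φ ∈ (1,2] real root of ρ^m − ρ^{m−1} − 1; any complex root ρ ≠ φ has |ρ| < φ. -/
theorem dominant_root (m : ℕ) (hm : 1 ≤ m) (φ : ℝ) (hφ : φ ∈ Set.Ioc (1 : ℝ) 2)
    (hroot : φ ^ m - φ ^ (m - 1) - 1 = 0)
    (ρ : ℂ) (hρ : ρ ^ m - ρ ^ (m - 1) - 1 = 0) (hne : ρ ≠ (φ : ℂ)) :
    ‖ρ‖ < φ :=
  dominant_root_general m φ hφ hroot ρ hρ hne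
end

section
/- Let z', z'' ∈ [0,1] and set z⁺ = z'z'' and z⁻ = z' + z'' − z'z''. Then log₂(2/(1+z⁺)) + log₂(2/(1+z⁻)) ≥ log₂(2/(1+z')) + log₂(2/(1+z'')), with equality if and only if z' ∈ {0,1} or z'' ∈ {0,1}. -/
/-- Sum cut-off rate inequality for Bhattacharyya parameters, with equality iff
z' ∈ {0,1} or z'' ∈ {0,1}. -/
theorem cutoff_sum_inequality (z' z'' : ℝ)
    (h' : z' ∈ Set.Icc (0 : ℝ) 1) (h'' : z'' ∈ Set.Icc (0 : ℝ) 1) :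
    Real.logb 2 (2 / (1 + z' * z'')) +
        Real.logb 2 (2 / (1 + (z' + z'' - z' * z''))) ≥
      Real.logb 2 (2 / (1 + z')) + Real.logb 2 (2 / (1 + z'')) ∧
    (Real.logb 2 (2 / (1 + z' * z'')) +
        Real.logb 2 (2 / (1 + (z' + z'' - z' * z''))) =
      Real.logb 2 (2 / (1 + z')) + Real.logb 2 (2 / (1 + z'')) ↔
        (z' = 0 ∨ z' = 1) ∨ (z'' = 0 ∨ z'' = 1)) := by
  obtain ⟨h0', h1'⟩ := h'
  obtain ⟨h0'', h1''⟩ := h''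
  set A : ℝ := 1 + z' * z'' with hA
  set B : ℝ := 1 + (z' + z'' - z' * z'') with hB
  set C : ℝ := 1 + z' with hC
  set D : ℝ := 1 + z'' with hD
  have hApos : 0 < A := by nlinarith
  have hBpos : 0 < B := by nlinarith
  have hCpos : 0 < C := by nlinarith
  have hDpos : 0 < D := by nlinarith
  have hdiff : C * D - A * B = z' * z'' * (1 - z') * (1 - z'') := by
    simp only [hA, hB, hC, hD]; ring
  have hle : A * B ≤ C * D := by
    nlinarith [mul_nonneg (mul_nonneg (mul_nonneg h0' h0'') (by linarith : (0:ℝ) ≤ 1 - z'))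
      (by linarith : (0:ℝ) ≤ 1 - z'')]
  have hb : (1:ℝ) < 2 := one_lt_two
  have hsplit : ∀ x : ℝ, 0 < x → Real.logb 2 (2 / x) = 1 - Real.logb 2 x := by
    intro x hx
    rw [Real.logb_div two_ne_zero (ne_of_gt hx), Real.logb_self_eq_one one_lt_two]
  have hLHS : Real.logb 2 (2 / A) + Real.logb 2 (2 / B)
      = 2 - Real.logb 2 (A * B) := by
    rw [hsplit A hApos, hsplit B hBpos, Real.logb_mul (ne_of_gt hApos) (ne_of_gt hBpos)]; ring
  have hRHS : Real.logb 2 (2 / C) + Real.logb 2 (2 / D)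
      = 2 - Real.logb 2 (C * D) := by
    rw [hsplit C hCpos, hsplit D hDpos, Real.logb_mul (ne_of_gt hCpos) (ne_of_gt hDpos)]; ring
  have hlog_le : Real.logb 2 (A * B) ≤ Real.logb 2 (C * D) :=
    Real.logb_le_logb_of_le one_lt_two (mul_pos hApos hBpos) hle
  constructor
  · rw [hLHS, hRHS]; linarith
  · rw [hLHS, hRHS]
    constructor
    · intro heq
      have hlogeq : Real.logb 2 (A * B) = Real.logb 2 (C * D) := by linarith
      have hABCD : A * B = C * D := by
        have := Real.logb_injOn_pos hb (Set.mem_Ioi.mpr (mul_pos hApos hBpos))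
          (Set.mem_Ioi.mpr (mul_pos hCpos hDpos)) hlogeq
        exact this
      have hz : z' * z'' * (1 - z') * (1 - z'') = 0 := by linarith [hdiff]
      rcases mul_eq_zero.mp hz with h | h
      · rcases mul_eq_zero.mp h with h | h
        · rcases mul_eq_zero.mp h with h | h
          · exact Or.inl (Or.inl h)
          · exact Or.inr (Or.inl h)
        · exact Or.inl (Or.inr (by linarith))
      · exact Or.inr (Or.inr (by linarith))
    · intro h
      have hz : z' * z'' * (1 - z') * (1 - z'') = 0 := by
        rcases h with (h | h) | (h | h) <;> rw [h] <;> ring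
      have hABCD : A * B = C * D := by linarith [hdiff]
      rw [hABCD]
end

section
/- Let m ≥ 1, φ ∈ (1,2] the unique real root of ρ^m − ρ^{m−1} − 1, and p⁻ = (φ−1)/(1 + m(φ−1)). Then the function G(m,q) = (1−(m−1)q)·H(q/(1−(m−1)q)) on [0,1/m] attains its maximum at q = p⁻, and G(m,p⁻) = log₂ φ. -/
/-!
Write `G q = s · H(q / s)` with `s = 1 - (m - 1) q`. The root equation says that
`u = φ⁻ᵐ` and `v = φ⁻¹` form a probability vector, so Gibbs' inequality against `(u, v)` gives
`H(x) ≤ -(x log₂ u + (1 - x) log₂ v) = (1 + (m - 1) x) log₂ φ`, with equality at `x = u`.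
Since `s · (1 + (m - 1) q / s) = 1`, this reads `G q ≤ log₂ φ`, with equality when
`q / s = u`, which is the case `q = p⁻`.
-/

/-- Binary entropy function (base 2). -/
noncomputable def binEntropy (p : ℝ) : ℝ := -(p * Real.logb 2 p) - (1 - p) * Real.logb 2 (1 - p)

open Real (log logb negMulLog)

lemma negMulLog_le_sub_sub_mul_log {x y : ℝ} (hx : 0 ≤ x) (hy : 0 < y) :
    negMulLog x ≤ y - x - x * log y := by
  have hxy : x = y * (x / y) := by field_simp
  have key := Real.negMulLog_le_one_sub_self (div_nonneg hx hy.le)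
  rw [hxy, Real.negMulLog_mul, Real.negMulLog]
  calc x / y * (-y * log y) + y * negMulLog (x / y)
      ≤ x / y * (-y * log y) + y * (1 - x / y) := by gcongr
    _ = y - y * (x / y) - y * (x / y) * log y := by field_simp; ring

lemma binEntropy_eq_negMulLog (x : ℝ) :
    binEntropy x = (negMulLog x + negMulLog (1 - x)) / log 2 := by
  simp only [binEntropy, Real.negMulLog, Real.logb]
  ring

/-- Gibbs' inequality for a two-point distribution. -/
lemma binEntropy_le_of_add_eq_one {x u v : ℝ} (hx₀ : 0 ≤ x) (hx₁ : x ≤ 1) (hu : 0 < u)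
    (hv : 0 < v) (huv : u + v = 1) :
    binEntropy x ≤ -(x * logb 2 u + (1 - x) * logb 2 v) := by
  have hu' := negMulLog_le_sub_sub_mul_log hx₀ hu
  have hv' := negMulLog_le_sub_sub_mul_log (sub_nonneg.2 hx₁) hv
  rw [binEntropy_eq_negMulLog, Real.logb, Real.logb, div_le_iff₀ (Real.log_pos one_lt_two)]
  have : -(x * (log u / log 2) + (1 - x) * (log v / log 2)) * log 2
      = -(x * log u + (1 - x) * log v) := by field_simp
  linarith

lemma inv_pow_add_inv_eq_one {φ : ℝ} {m : ℕ} (hm : 1 ≤ m) (hφ : 0 < φ)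
    (hroot : φ ^ m - φ ^ (m - 1) - 1 = 0) : (φ ^ m)⁻¹ + φ⁻¹ = 1 := by
  have hpow : φ ^ m = φ ^ (m - 1) * φ := by rw [← pow_succ, Nat.sub_add_cancel hm]
  rw [inv_add_inv (by positivity) hφ.ne', div_eq_one_iff_eq (by positivity)]
  linear_combination (-φ) * hroot + hpow

lemma binEntropy_le_of_inv_pow_add_inv_eq_one {φ x : ℝ} {m : ℕ} (hφ : 0 < φ)
    (hsum : (φ ^ m)⁻¹ + φ⁻¹ = 1) (hx₀ : 0 ≤ x) (hx₁ : x ≤ 1) :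
    binEntropy x ≤ (1 + ((m : ℝ) - 1) * x) * logb 2 φ := by
  calc binEntropy x ≤ -(x * logb 2 (φ ^ m)⁻¹ + (1 - x) * logb 2 φ⁻¹) :=
        binEntropy_le_of_add_eq_one hx₀ hx₁ (by positivity) (by positivity) hsum
    _ = (1 + ((m : ℝ) - 1) * x) * logb 2 φ := by
        rw [Real.logb_inv, Real.logb_inv, Real.logb_pow]; ring

lemma binEntropy_inv_pow_of_inv_pow_add_inv_eq_one {φ : ℝ} {m : ℕ}
    (hsum : (φ ^ m)⁻¹ + φ⁻¹ = 1) :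
    binEntropy (φ ^ m)⁻¹ = (1 + ((m : ℝ) - 1) * (φ ^ m)⁻¹) * logb 2 φ := by
  have hv : 1 - (φ ^ m)⁻¹ = φ⁻¹ := by rw [← hsum]; ring
  rw [binEntropy, hv, Real.logb_inv, Real.logb_inv, Real.logb_pow]
  linear_combination logb 2 φ * hsum

lemma one_sub_mul_mul_one_add_mul_div {c q : ℝ} (hs : 0 < 1 - c * q) :
    (1 - c * q) * (1 + c * (q / (1 - c * q))) = 1 := by
  field_simp
  ring

lemma one_sub_mul_mul_binEntropy_le {φ q : ℝ} {m : ℕ} (hφ : 0 < φ)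
    (hsum : (φ ^ m)⁻¹ + φ⁻¹ = 1) (hq₀ : 0 ≤ q) (hmq : m * q ≤ 1) :
    (1 - ((m : ℝ) - 1) * q) * binEntropy (q / (1 - ((m : ℝ) - 1) * q)) ≤ logb 2 φ := by
  have hs : 0 < 1 - ((m : ℝ) - 1) * q := by nlinarith
  calc (1 - ((m : ℝ) - 1) * q) * binEntropy (q / (1 - ((m : ℝ) - 1) * q))
      ≤ (1 - ((m : ℝ) - 1) * q) *
        ((1 + ((m : ℝ) - 1) * (q / (1 - ((m : ℝ) - 1) * q))) * logb 2 φ) := by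
        refine mul_le_mul_of_nonneg_left
          (binEntropy_le_of_inv_pow_add_inv_eq_one hφ hsum (by positivity) ?_) hs.le
        rw [div_le_one hs]
        linarith
    _ = logb 2 φ := by rw [← mul_assoc, one_sub_mul_mul_one_add_mul_div hs, one_mul]

lemma one_sub_mul_mul_binEntropy_eq {φ p : ℝ} {m : ℕ} (hφ : 1 < φ)
    (hsum : (φ ^ m)⁻¹ + φ⁻¹ = 1) (hp : p = (φ - 1) / (1 + m * (φ - 1))) :
    (1 - ((m : ℝ) - 1) * p) * binEntropy (p / (1 - ((m : ℝ) - 1) * p)) = logb 2 φ := by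
  have hD : 0 < 1 + m * (φ - 1) := by nlinarith
  have hs : 1 - ((m : ℝ) - 1) * p = φ / (1 + m * (φ - 1)) := by
    rw [hp]; field_simp; ring
  have hs₀ : 0 < 1 - ((m : ℝ) - 1) * p := by rw [hs]; positivity
  have hx : p / (1 - ((m : ℝ) - 1) * p) = (φ ^ m)⁻¹ := by
    rw [eq_sub_of_add_eq hsum, hs, hp, div_div_div_cancel_right₀ hD.ne']
    field_simp
  rw [hx, binEntropy_inv_pow_of_inv_pow_add_inv_eq_one hsum, ← mul_assoc, ← hx,
    one_sub_mul_mul_one_add_mul_div hs₀, one_mul]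

/-- G(m,·) attains its maximum on [0,1/m] at p⁻ = (φ−1)/(1+m(φ−1)), with value log₂ φ. -/
theorem G_max (m : ℕ) (hm : 1 ≤ m) (φ : ℝ) (hφ : φ ∈ Set.Ioc (1 : ℝ) 2)
    (hroot : φ ^ m - φ ^ (m - 1) - 1 = 0) :
    let G : ℝ → ℝ :=
      fun q => (1 - ((m : ℝ) - 1) * q) * binEntropy (q / (1 - ((m : ℝ) - 1) * q))
    let pminus : ℝ := (φ - 1) / (1 + m * (φ - 1))
    (∀ q ∈ Set.Icc (0 : ℝ) (1 / m), G q ≤ G pminus) ∧ G pminus = Real.logb 2 φ := by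
  intro G pminus
  have hφ₀ : 0 < φ := zero_lt_one.trans hφ.1
  have hsum := inv_pow_add_inv_eq_one hm hφ₀ hroot
  have hval : G pminus = logb 2 φ := one_sub_mul_mul_binEntropy_eq hφ.1 hsum rfl
  refine ⟨fun q ⟨hq₀, hq₁⟩ ↦ ?_, hval⟩
  have hmq : (m : ℝ) * q ≤ 1 := by
    rwa [le_div_iff₀ (by exact_mod_cast hm), mul_comm] at hq₁
  rw [hval]
  exact one_sub_mul_mul_binEntropy_le hφ₀ hsum hq₀ hmq
end

section
/- If q* ∈ (0, 1/(m+1)) satisfies (m−1)·log(1−(m−1)q*) + log q* = m·log(1−mq*), then η := (1−(m−1)q*)/(1−mq*) satisfies η^m − η^{m−1} − 1 = 0 and η ∈ (1,2]. -/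
/-- If q* ∈ (0, 1/(m+1)) satisfies the critical-point equation, then
η = (1−(m−1)q*)/(1−mq*) is a root of η^m − η^{m−1} − 1 and η ∈ (1,2]. -/
theorem critical_point_gives_root (m : ℕ) (hm : 1 ≤ m) (q : ℝ)
    (hq : q ∈ Set.Ioo (0 : ℝ) (1 / (m + 1)))
    (heq : ((m : ℝ) - 1) * Real.log (1 - ((m : ℝ) - 1) * q) + Real.log q =
      m * Real.log (1 - m * q)) :
    let η : ℝ := (1 - ((m : ℝ) - 1) * q) / (1 - m * q)
    η ^ m - η ^ (m - 1) - 1 = 0 ∧ η ∈ Set.Ioc (1 : ℝ) 2 := by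
  obtain ⟨k, rfl⟩ : ∃ k, m = k + 1 := ⟨m - 1, (Nat.succ_pred_eq_of_pos hm).symm⟩
  obtain ⟨hq0, hq1⟩ := hq
  push_cast at heq hq1 ⊢
  have hk0 : (0 : ℝ) ≤ (k : ℝ) := Nat.cast_nonneg k
  have hq1' : q * ((k : ℝ) + 1 + 1) < 1 := by
    rw [lt_div_iff₀ (by positivity)] at hq1
    linarith
  set A : ℝ := 1 - ((k : ℝ) + 1 - 1) * q with hA
  set B : ℝ := 1 - ((k : ℝ) + 1) * q with hB
  have hBpos : 0 < B := by rw [hB]; nlinarith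
  have hApos : 0 < A := by rw [hA]; nlinarith
  have hab : A - B = q := by rw [hA, hB]; ring
  -- key equation
  have hlog : Real.log (A ^ k * q) = Real.log (B ^ (k + 1)) := by
    rw [Real.log_mul (pow_ne_zero _ hApos.ne') hq0.ne', Real.log_pow, Real.log_pow]
    push_cast
    linarith [heq]
  have hAB : A ^ k * q = B ^ (k + 1) := by
    have h := congrArg Real.exp hlog
    rwa [Real.exp_log (by positivity), Real.exp_log (by positivity)] at h
  constructor
  · rw [div_pow, div_pow, sub_eq_zero]
    rw [div_sub_div _ _ (by positivity) (by positivity)]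
    rw [div_eq_one_iff_eq (by positivity)]
    linear_combination A ^ k * B ^ k * hab + B ^ k * hAB
  · constructor
    · rw [lt_div_iff₀ hBpos]; linarith
    · rw [div_le_iff₀ hBpos, hA, hB]; nlinarith
end

section
/- For integers n ≥ 1, m ≥ 1, and 0 ≤ k ≤ n/m, the number of sequences s ∈ {+,−,★}^n in which the symbol − occurs exactly k times, each occurrence of − is immediately followed by exactly m−1 consecutive ★'s (possibly truncated at the end of the sequence), and all other symbols are +, is at most (1+(n+m))^m · C(n−(m−1)k, k), where C denotes the binomial coefficient. -/
/-- Valid state sequences of the memory-m construction, over alphabet Fin 3 with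
0 = '+', 1 = '−', 2 = '★': each '−' is immediately followed by m−1 '★'s (possibly
truncated at the end), and every '★' arises this way (all other symbols are '+'). -/
def ValidState (m n : ℕ) (s : Fin n → Fin 3) : Prop :=
  (∀ i : Fin n, s i = 1 → ∀ t : Fin n, (i : ℕ) < t → (t : ℕ) ≤ (i : ℕ) + (m - 1) → s t = 2) ∧
  (∀ t : Fin n, s t = 2 → ∃ i : Fin n, s i = 1 ∧ (i : ℕ) < t ∧ (t : ℕ) ≤ (i : ℕ) + (m - 1)) ∧
  (∀ i : Fin n, s i = 0 ∨ s i = 1 ∨ s i = 2)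

/-- A valid state is determined by the positions of its '−'s. -/
lemma validState_ext {m n : ℕ} {s s' : Fin n → Fin 3}
    (h : ValidState m n s) (h' : ValidState m n s')
    (hiff : ∀ i, s i = 1 ↔ s' i = 1) : s = s' := by
  obtain ⟨h1, h2, h3⟩ := h
  obtain ⟨h1', h2', h3'⟩ := h'
  have c2 : ∀ i, s i = 2 → s' i = 2 := by
    intro i hi
    obtain ⟨j, hj1, hjl, hju⟩ := h2 i hi
    exact h1' j ((hiff j).1 hj1) i hjl hju
  have c2' : ∀ i, s' i = 2 → s i = 2 := by
    intro i hi
    obtain ⟨j, hj1, hjl, hju⟩ := h2' i hi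
    exact h1 j ((hiff j).2 hj1) i hjl hju
  funext i
  rcases h3 i with h0 | hI | hII
  · rcases h3' i with g | g | g
    · rw [h0, g]
    · have := (hiff i).2 g; rw [h0] at this; exact absurd this (by decide)
    · have := c2' i g; rw [h0] at this; exact absurd this (by decide)
  · rw [hI, ((hiff i).1 hI)]
  · rw [hII, c2 i hII]

/-- Two '−'s in a valid state are at least `m` apart. -/
lemma validState_gap {m n : ℕ} (hm : 1 ≤ m) {s : Fin n → Fin 3} (hs : ValidState m n s)
    {x y : Fin n} (hx : s x = 1) (hy : s y = 1) (hxy : (x : ℕ) < y) :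
    (x : ℕ) + m ≤ y := by
  by_contra h
  have h2 : (y : ℕ) ≤ (x : ℕ) + (m - 1) := by omega
  have := hs.1 x hx y hxy h2
  rw [hy] at this
  exact absurd this (by decide)

/-- One-step choose inequality. -/
lemma choose_succ_le {M k : ℕ} (h : k ≤ M) :
    Nat.choose (M + 1) k ≤ (M + 1) * Nat.choose M k := by
  cases k with
  | zero => simp
  | succ j =>
      have pascal : Nat.choose (M + 1) (j + 1) = Nat.choose M j + Nat.choose M (j + 1) :=
        Nat.choose_succ_succ M j
      have hrec : Nat.choose M (j + 1) * (j + 1) = Nat.choose M j * (M - j) :=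
        Nat.choose_succ_right_eq M j
      have h1 : Nat.choose M j ≤ Nat.choose M (j + 1) * (j + 1) := by
        rw [hrec]
        have : 1 ≤ M - j := by omega
        calc Nat.choose M j = Nat.choose M j * 1 := by ring
          _ ≤ Nat.choose M j * (M - j) := Nat.mul_le_mul_left _ this
      have h2 : Nat.choose M j ≤ Nat.choose M (j + 1) * M :=
        h1.trans (Nat.mul_le_mul_left _ (by omega))
      calc Nat.choose (M + 1) (j + 1) = Nat.choose M j + Nat.choose M (j + 1) := pascal
        _ ≤ Nat.choose M (j + 1) * M + Nat.choose M (j + 1) := by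
            exact Nat.add_le_add h2 le_rfl
        _ = (M + 1) * Nat.choose M (j + 1) := by ring

/-- Iterated choose inequality. -/
lemma choose_add_le (N k : ℕ) (h : k ≤ N) :
    ∀ d : ℕ, Nat.choose (N + d) k ≤ (N + d) ^ d * Nat.choose N k := by
  intro d
  induction d with
  | zero => simp
  | succ d ih =>
      have h1 : Nat.choose (N + d + 1) k ≤ (N + d + 1) * Nat.choose (N + d) k :=
        choose_succ_le (by omega)
      calc Nat.choose (N + (d + 1)) k = Nat.choose (N + d + 1) k := by ring_nf
        _ ≤ (N + d + 1) * Nat.choose (N + d) k := h1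
        _ ≤ (N + d + 1) * ((N + d) ^ d * Nat.choose N k) := Nat.mul_le_mul_left _ ih
        _ ≤ (N + d + 1) * ((N + d + 1) ^ d * Nat.choose N k) := by
            exact Nat.mul_le_mul_left _
              (Nat.mul_le_mul_right _ (Nat.pow_le_pow_left (by omega) d))
        _ = (N + (d + 1)) ^ (d + 1) * Nat.choose N k := by ring

/-- Counting lemma: the number of valid states with exactly k '−'s is at most
C(n − (m−1)(k−1), k), by the compression injection. -/
lemma count_valid_le (m n k : ℕ) (hm : 1 ≤ m) :
    Nat.card {s : Fin n → Fin 3 //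
        ValidState m n s ∧ Nat.card {i : Fin n // s i = 1} = k} ≤
      Nat.choose (n - (m - 1) * (k - 1)) k := by
  classical
  set M := n - (m - 1) * (k - 1) with hMdef
  set T := {s : Fin n → Fin 3 //
      ValidState m n s ∧ Nat.card {i : Fin n // s i = 1} = k} with hT
  -- the minus set
  let A : T → Finset (Fin n) := fun p => Finset.univ.filter (fun i => p.1 i = 1)
  have hAmem : ∀ (p : T) (i : Fin n), i ∈ A p ↔ p.1 i = 1 := by
    intro p i; simp [A]
  have hAcard : ∀ p : T, (A p).card = k := by
    intro p
    have := p.2.2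
    rwa [Nat.card_eq_fintype_card, Fintype.card_subtype] at this
  -- the sorted enumeration of minus positions
  let a : ∀ p : T, Fin k → Fin n := fun p => (A p).orderEmbOfFin (hAcard p)
  have ha1 : ∀ (p : T) (j : Fin k), p.1 (a p j) = 1 := by
    intro p j
    exact (hAmem p _).1 (Finset.orderEmbOfFin_mem (A p) (hAcard p) j)
  have hamono : ∀ p : T, StrictMono (a p) := fun p =>
    ((A p).orderEmbOfFin (hAcard p)).strictMono
  have hgap : ∀ (p : T) (j j' : Fin k), j < j' → ((a p j : ℕ)) + m ≤ (a p j' : ℕ) := by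
    intro p j j' hjj
    exact validState_gap hm p.2.1 (ha1 p j) (ha1 p j') (hamono p hjj)
  -- lower bound on positions
  have hlb : ∀ (p : T) (j : Fin k), m * (j : ℕ) ≤ (a p j : ℕ) := by
    intro p j
    obtain ⟨r, hr⟩ := j
    induction r with
    | zero => simp
    | succ r ih =>
        have hr' : r < k := by omega
        have h1 : m * r ≤ (a p ⟨r, hr'⟩ : ℕ) := ih hr'
        have h2 : ((a p ⟨r, hr'⟩ : ℕ)) + m ≤ (a p ⟨r + 1, hr⟩ : ℕ) :=
          hgap p ⟨r, hr'⟩ ⟨r + 1, hr⟩ (by simp [Fin.lt_def])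
        simp only [Fin.val_mk] at *
        calc m * (r + 1) = m * r + m := by ring
          _ ≤ (a p ⟨r, hr'⟩ : ℕ) + m := by omega
          _ ≤ _ := h2
  -- stepped bound
  have hstep : ∀ (p : T) (d r : ℕ) (h : r + d < k),
      (a p ⟨r, by omega⟩ : ℕ) + m * d ≤ (a p ⟨r + d, h⟩ : ℕ) := by
    intro p d
    induction d with
    | zero => intro r h; simp
    | succ d ih =>
        intro r h
        have h' : r + d < k := by omega
        have h1 := ih r h'
        have h2 : ((a p ⟨r + d, h'⟩ : ℕ)) + m ≤ (a p ⟨r + d + 1, by omega⟩ : ℕ) :=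
          hgap p ⟨r + d, h'⟩ ⟨r + d + 1, by omega⟩ (by simp [Fin.lt_def])
        have : (a p ⟨r + (d + 1), h⟩ : ℕ) = (a p ⟨r + d + 1, by omega⟩ : ℕ) := by
          congr 1
        rw [this]
        calc (a p ⟨r, by omega⟩ : ℕ) + m * (d + 1)
            = ((a p ⟨r, by omega⟩ : ℕ) + m * d) + m := by ring
          _ ≤ (a p ⟨r + d, h'⟩ : ℕ) + m := by omega
          _ ≤ _ := h2
  -- the compressed values
  let v : ∀ p : T, Fin k → ℕ := fun p j => (a p j : ℕ) - (m - 1) * (j : ℕ)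
  have hv_exact : ∀ (p : T) (j : Fin k), v p j + (m - 1) * (j : ℕ) = (a p j : ℕ) := by
    intro p j
    have h1 := hlb p j
    have h2 : (m - 1) * (j : ℕ) ≤ m * (j : ℕ) := Nat.mul_le_mul_right _ (by omega)
    simp only [v]
    omega
  have hv_lt : ∀ (p : T) (j : Fin k), v p j < M := by
    intro p j
    have hk1 : 0 < k := j.pos
    have hub : (a p j : ℕ) + m * (k - 1 - (j : ℕ)) ≤ n - 1 := by
      rcases Nat.eq_or_lt_of_le (Nat.le_of_lt_succ (by omega : (j : ℕ) < k - 1 + 1)) with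
        heq | hlt
      · have : k - 1 - (j : ℕ) = 0 := by omega
        rw [this]
        have := (a p j).isLt
        omega
      · have h := hstep p (k - 1 - (j : ℕ)) (j : ℕ) (by omega)
        have hfin := (a p ⟨(j : ℕ) + (k - 1 - (j : ℕ)), by omega⟩).isLt
        have hj : (⟨(j : ℕ), by omega⟩ : Fin k) = j := by ext; rfl
        rw [hj] at h
        omega
    -- arithmetic
    have h2 := hv_exact p j
    have hsplit : (m - 1) * (k - 1) = (m - 1) * (j : ℕ) + (m - 1) * (k - 1 - (j : ℕ)) := by
      rw [← Nat.mul_add]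
      congr 1
      omega
    have hmm : (m - 1) * (k - 1 - (j : ℕ)) ≤ m * (k - 1 - (j : ℕ)) :=
      Nat.mul_le_mul_right _ (by omega)
    -- v p j + (m-1)(k-1) ≤ a p j + (m-1)(k-1-j) ≤ n-1 < n, and M = n - (m-1)(k-1)
    have key : v p j + (m - 1) * (k - 1) ≤ n - 1 := by
      rw [hsplit, ← Nat.add_assoc, h2]
      omega
    have hn1 : 1 ≤ n := (a p j).pos
    omega
  have hv_mono : ∀ p : T, StrictMono (v p) := by
    intro p
    intro j j' hjj
    have hd : (j : ℕ) < (j' : ℕ) := hjj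
    have h := hstep p ((j' : ℕ) - (j : ℕ)) (j : ℕ) (by omega)
    have hj : (⟨(j : ℕ), by omega⟩ : Fin k) = j := by ext; rfl
    have hj' : (⟨(j : ℕ) + ((j' : ℕ) - (j : ℕ)), by omega⟩ : Fin k) = j' := by ext; simp; omega
    rw [hj, hj'] at h
    have e1 := hv_exact p j
    have e2 := hv_exact p j'
    have hsplit : (m - 1) * (j' : ℕ) =
        (m - 1) * (j : ℕ) + (m - 1) * ((j' : ℕ) - (j : ℕ)) := by
      rw [← Nat.mul_add]
      congr 1
      omega
    have hmm : (m - 1) * ((j' : ℕ) - (j : ℕ)) + ((j' : ℕ) - (j : ℕ)) =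
        m * ((j' : ℕ) - (j : ℕ)) := by
      have : (m - 1) + 1 = m := by omega
      calc (m - 1) * ((j' : ℕ) - (j : ℕ)) + ((j' : ℕ) - (j : ℕ))
          = ((m - 1) + 1) * ((j' : ℕ) - (j : ℕ)) := by ring
        _ = m * ((j' : ℕ) - (j : ℕ)) := by rw [this]
    show v p j < v p j'
    omega
  -- the injection into k-subsets of range M
  let F : T → Finset ℕ := fun p => Finset.image (v p) Finset.univ
  have hFcard : ∀ p : T, (F p).card = k := by
    intro p
    rw [Finset.card_image_of_injective _ (hv_mono p).injective, Finset.card_univ,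
      Fintype.card_fin]
  have hFsub : ∀ p : T, F p ⊆ Finset.range M := by
    intro p x hx
    obtain ⟨j, _, rfl⟩ := Finset.mem_image.1 hx
    exact Finset.mem_range.2 (hv_lt p j)
  let G : T → ((Finset.range M).powersetCard k : Finset (Finset ℕ)) := fun p =>
    ⟨F p, Finset.mem_powersetCard.2 ⟨hFsub p, hFcard p⟩⟩
  have hGinj : Function.Injective G := by
    intro p q hpq
    have hFeq : F p = F q := congrArg Subtype.val hpq
    -- both v p and v q are the unique monotone enumeration of F p
    have hvp : v p = (F p).orderEmbOfFin (hFcard p) :=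
      Finset.orderEmbOfFin_unique (hFcard p)
        (fun j => Finset.mem_image.2 ⟨j, Finset.mem_univ j, rfl⟩) (hv_mono p)
    have hvq : v q = (F p).orderEmbOfFin (hFcard p) := by
      apply Finset.orderEmbOfFin_unique (hFcard p)
      · intro j
        rw [hFeq]
        exact Finset.mem_image.2 ⟨j, Finset.mem_univ j, rfl⟩
      · exact hv_mono q
    have hveq : v p = v q := hvp.trans hvq.symm
    have haeq : ∀ j : Fin k, a p j = a q j := by
      intro j
      have e1 := hv_exact p j
      have e2 := hv_exact q j
      have : v p j = v q j := congrFun hveq j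
      ext
      omega
    have hAeq : A p = A q := by
      apply Finset.coe_injective
      have r1 : Set.range (a p) = (A p : Set (Fin n)) :=
        Finset.range_orderEmbOfFin (A p) (hAcard p)
      have r2 : Set.range (a q) = (A q : Set (Fin n)) :=
        Finset.range_orderEmbOfFin (A q) (hAcard q)
      rw [← r1, ← r2]
      have : a p = a q := funext haeq
      rw [this]
    apply Subtype.ext
    apply validState_ext p.2.1 q.2.1
    intro i
    rw [← hAmem p i, ← hAmem q i, hAeq]
  calc Nat.card T ≤ Nat.card ((Finset.range M).powersetCard k : Finset (Finset ℕ)) :=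
        Nat.card_le_card_of_injective G hGinj
    _ = ((Finset.range M).powersetCard k).card := Nat.card_eq_finsetCard _
    _ = Nat.choose M k := by rw [Finset.card_powersetCard, Finset.card_range]

/-- The number of valid state sequences of length n with exactly k '−'s is at most
(1+(n+m))^m · C(n−(m−1)k, k). -/
theorem type_class_size_bound (m n k : ℕ) (hm : 1 ≤ m) (hn : 1 ≤ n)
    (hk : m * k ≤ n) :
    Nat.card {s : Fin n → Fin 3 //
        ValidState m n s ∧ Nat.card {i : Fin n // s i = 1} = k} ≤
      (1 + (n + m)) ^ m * Nat.choose (n - (m - 1) * k) k := by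
  refine le_trans (count_valid_le m n k hm) ?_
  obtain ⟨m', rfl⟩ : ∃ m', m = m' + 1 := ⟨m - 1, by omega⟩
  simp only [Nat.add_sub_cancel]
  rcases Nat.eq_zero_or_pos k with rfl | hkpos
  · -- k = 0
    calc Nat.choose (n - m' * (0 - 1)) 0
        = 1 := by simp
      _ ≤ (1 + (n + (m' + 1))) ^ (m' + 1) * Nat.choose (n - m' * 0) 0 := by
          simp only [Nat.mul_zero, Nat.sub_zero, Nat.choose_zero_right, Nat.mul_one]
          exact Nat.one_le_pow _ _ (by omega)
  · -- k ≥ 1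
    obtain ⟨k', rfl⟩ : ∃ k', k = k' + 1 := ⟨k - 1, by omega⟩
    obtain ⟨Q, hQ⟩ : ∃ Q, Q = m' * k' := ⟨_, rfl⟩
    have hQ1 : m' * (k' + 1) = Q + m' := by rw [hQ]; ring
    have hQ2 : (m' + 1) * (k' + 1) = Q + m' + k' + 1 := by rw [hQ]; ring
    have hkn : Q + m' + k' + 1 ≤ n := by rw [← hQ2]; exact hk
    have hsimp : (k' + 1) - 1 = k' := by omega
    rw [hsimp, ← hQ]
    set N := n - m' * (k' + 1) with hN
    have hNQ : N = n - (Q + m') := by rw [hN, hQ1]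
    have hMeq : n - Q = N + m' := by omega
    have hkN : k' + 1 ≤ N := by omega
    have hNle : N + m' ≤ 1 + (n + (m' + 1)) := by omega
    calc Nat.choose (n - Q) (k' + 1)
        = Nat.choose (N + m') (k' + 1) := by rw [hMeq]
      _ ≤ (N + m') ^ m' * Nat.choose N (k' + 1) :=
          choose_add_le N (k' + 1) hkN m'
      _ ≤ (1 + (n + (m' + 1))) ^ m' * Nat.choose N (k' + 1) :=
          Nat.mul_le_mul_right _ (Nat.pow_le_pow_left hNle _)
      _ ≤ (1 + (n + (m' + 1))) ^ (m' + 1) * Nat.choose N (k' + 1) :=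
          Nat.mul_le_mul_right _ (Nat.pow_le_pow_right (by omega) (by omega))
end

section
/- Let (E_n)_{n≥1} be a sequence of reals in [0,1] with E_n = 1 for n ≤ 0, and suppose there is μ ∈ (0,1) (possibly depending on n) with E_n ≥ μ·E_{n−1} + (1−μ)·E_{n−m} for all n ≥ 1. Define Ê_k = min{E_{km}, E_{km−1}, …, E_{km−(m−1)}}. Then Ê_k ≥ Ê_{k−1} for all k ≥ 2; i.e., the decimated sequence (Ê_k) is monotone nondecreasing, hence convergent. -/
/-- The decimated sequence Ê_k = min{E_{km}, …, E_{km−(m−1)}} of a sequence satisfying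
E_n ≥ μE_{n−1} + (1−μ)E_{n−m} (with E_n ∈ [0,1], E_n = 1 for n ≤ 0) is monotone
nondecreasing, hence convergent. -/
theorem decimated_monotone_and_convergent (m : ℕ) (hm : 1 ≤ m) (E : ℤ → ℝ)
    (hrange : ∀ n : ℤ, E n ∈ Set.Icc (0 : ℝ) 1)
    (hinit : ∀ n : ℤ, n ≤ 0 → E n = 1)
    (hrec : ∀ n : ℤ, 1 ≤ n → ∃ μ ∈ Set.Ioo (0 : ℝ) 1,
      μ * E (n - 1) + (1 - μ) * E (n - m) ≤ E n) :
    let Ehat : ℤ → ℝ := fun k =>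
      (Finset.range m).inf' (Finset.nonempty_range_iff.mpr (by omega))
        (fun i => E (k * m - i))
    (∀ k : ℤ, 2 ≤ k → Ehat (k - 1) ≤ Ehat k) ∧
    ∃ L : ℝ, Filter.Tendsto (fun k : ℕ => Ehat k) Filter.atTop (nhds L) := by
  intro Ehat
  have hm' : (1 : ℤ) ≤ (m : ℤ) := by exact_mod_cast hm
  have hstep : ∀ k : ℤ, 2 ≤ k → Ehat (k - 1) ≤ Ehat k := by
    intro k hk
    set c := Ehat (k - 1) with hc
    have hA : (m : ℤ) ≤ (k - 1) * m := by nlinarith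
    have hcle : ∀ i : ℕ, i < m → c ≤ E ((k - 1) * m - i) := by
      intro i hi
      exact Finset.inf'_le (fun i : ℕ => E ((k - 1) * m - i)) (Finset.mem_range.mpr hi)
    have key : ∀ N : ℕ, ∀ n : ℤ, (k - 1) * m < n → n - (k - 1) * m ≤ N → c ≤ E n := by
      intro N
      induction N with
      | zero => intro n h1 h2; push_cast at h2; linarith
      | succ N ih =>
        intro n h1 h2
        push_cast at h2
        have hn1 : 1 ≤ n := by linarith
        obtain ⟨μ, hμ, hr⟩ := hrec n hn1
        have ha : c ≤ E (n - 1) := by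
          by_cases hcase : (k - 1) * m < n - 1
          · exact ih (n - 1) hcase (by linarith)
          · push_neg at hcase
            have hn : n - 1 = (k - 1) * m := by linarith
            have := hcle 0 hm
            rw [hn]
            simpa using this
        have hb : c ≤ E (n - m) := by
          by_cases hcase : (k - 1) * m < n - m
          · exact ih (n - m) hcase (by linarith)
          · push_neg at hcase
            set d : ℤ := (k - 1) * m - (n - m) with hd
            have hd0 : 0 ≤ d := by linarith
            have hdm : d < m := by linarith
            have hdt : ((d.toNat : ℤ)) = d := Int.toNat_of_nonneg hd0
            have hlt : d.toNat < m := by omega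
            have := hcle d.toNat hlt
            have heq : (k - 1) * m - (d.toNat : ℤ) = n - m := by rw [hdt]; linarith
            rwa [heq] at this
        have h1' := mul_le_mul_of_nonneg_left ha hμ.1.le
        have h2' := mul_le_mul_of_nonneg_left hb (by linarith [hμ.2] : (0:ℝ) ≤ 1 - μ)
        linarith
    apply Finset.le_inf'
    intro i hi
    have hi' : (i : ℤ) < m := by exact_mod_cast Finset.mem_range.mp hi
    have hring : (k - 1) * m = k * m - m := by ring
    refine key m (k * m - i) (by linarith) (by push_cast; linarith)
  refine ⟨hstep, ?_⟩
  have hmono : Monotone (fun k : ℕ => Ehat ((k : ℤ) + 1)) := by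
    apply monotone_nat_of_le_succ
    intro k
    have := hstep ((k : ℤ) + 2) (by linarith [Int.ofNat_nonneg k])
    have h : ((k : ℤ) + 2) - 1 = (k : ℤ) + 1 := by ring
    rw [h] at this
    simpa [add_assoc] using this
  have hbdd : BddAbove (Set.range fun k : ℕ => Ehat ((k : ℤ) + 1)) := by
    refine ⟨1, ?_⟩
    rintro x ⟨k, rfl⟩
    calc Ehat ((k : ℤ) + 1) ≤ E (((k : ℤ) + 1) * m - (0 : ℕ)) :=
          Finset.inf'_le _ (Finset.mem_range.mpr hm)
      _ ≤ 1 := (hrange _).2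
  have hT := tendsto_atTop_ciSup hmono hbdd
  refine ⟨⨆ i : ℕ, Ehat ((i : ℤ) + 1), ?_⟩
  rw [← Filter.tendsto_add_atTop_iff_nat 1]
  have heq : (fun k : ℕ => Ehat (((k + 1 : ℕ) : ℤ))) = fun k : ℕ => Ehat ((k : ℤ) + 1) := by
    funext k; push_cast; ring_nf
  rw [heq]
  exact hT
end
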